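/- arXiv:2408.05320 — 4 statements merged into one kernel-verified Lean document; each statement's English description precedes it below -/
import Mathlib

section
/- If G is a finite DAG satisfying degree equality and R is a route in G, then G − R also satisfies degree equality: every inner vertex of G − R has equal indegree and outdegree in G − R. -/
open Finset

variable {V : Type*} [DecidableEq V] [Fintype V]

/-- The list of directed edges traversed by a list of vertices. -/
def edgeList (l : List V) : List (V × V) := l.zip l.tail

/-- In-degree of a vertex. -/
def indeg (E : Finset (V × V)) (v : V) : ℕ := (E.filter fun e => e.2 = v).card

/-- Out-degree of a vertex. -/
def outdeg (E : Finset (V × V)) (v : V) : ℕ := (E.filter fun e => e.1 = v).card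

/-- A directed graph with edge set `E` is acyclic: no directed cycle returns to a vertex. -/
def Acyclic (E : Finset (V × V)) : Prop :=
  ∀ (v : V) (l : List V), ¬ List.Chain (fun a b => (a, b) ∈ E) v (l ++ [v])

/-- A route: a directed path from `s` to `t` (with at least one edge), recorded as its
list of vertices. -/
def IsRoute (E : Finset (V × V)) (s t : V) (l : List V) : Prop :=
  l.Chain' (fun a b => (a, b) ∈ E) ∧ l.head? = some s ∧ l.getLast? = some t ∧ 2 ≤ l.length

/-- A route decomposition: a set of routes with pairwise disjoint edge sets whose union
is the whole edge set `E`. -/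
def IsRouteDecomp (E : Finset (V × V)) (s t : V) (R : Finset (List V)) : Prop :=
  (∀ l ∈ R, IsRoute E s t l) ∧
  (∀ l ∈ R, ∀ m ∈ R, l ≠ m → ∀ e, e ∈ edgeList l → e ∉ edgeList m) ∧
  (∀ e ∈ E, ∃ l ∈ R, e ∈ edgeList l)

/-- `s` is the unique source of the graph. -/
def UniqueSource (E : Finset (V × V)) (s : V) : Prop :=
  indeg E s = 0 ∧ ∀ v, indeg E v = 0 → v = s

/-- `t` is the unique sink of the graph. -/
def UniqueSink (E : Finset (V × V)) (t : V) : Prop :=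
  outdeg E t = 0 ∧ ∀ v, outdeg E v = 0 → v = t

/-- Degree equality: indegree equals outdegree at every inner vertex. -/
def DegreeEquality (E : Finset (V × V)) (s t : V) : Prop :=
  ∀ v, v ≠ s → v ≠ t → indeg E v = outdeg E v

/-- Edges of a chain list belong to the relation. -/
lemma chain'_mem_zip {r : V → V → Prop} :
    ∀ {l : List V}, l.Chain' r → ∀ {a b : V}, (a, b) ∈ l.zip l.tail → r a b := by
  intro l
  induction l with
  | nil => simp
  | cons x xs ih =>
    intro h a b hab
    cases xs with
    | nil => simp at hab
    | cons y ys =>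
      simp only [List.Chain', List.isChain_cons_cons] at h
      simp only [List.tail_cons, List.zip_cons_cons, List.mem_cons] at hab
      rcases hab with hab | hab
      · cases hab
        exact h.1
      · exact ih h.2 hab

/-- A chain in an acyclic graph has no repeated vertices. -/
lemma nodup_of_chain' {E : Finset (V × V)} (hA : Acyclic E) :
    ∀ {l : List V}, l.Chain' (fun a b => (a, b) ∈ E) → l.Nodup := by
  intro l
  induction l with
  | nil => intro _; simp
  | cons x xs ih =>
    intro h
    refine List.nodup_cons.2 ⟨?_, ih h.tail⟩
    intro hx
    obtain ⟨a, b, rfl⟩ := List.append_of_mem hx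
    have hpre : (x :: (a ++ [x])) <+: (x :: (a ++ x :: b)) := by
      refine ⟨b, ?_⟩
      simp
    have hc : (x :: (a ++ [x])).Chain' (fun a b => (a, b) ∈ E) := h.prefix hpre
    exact hA x a hc

lemma map_fst_zip_tail : ∀ (l : List V), (l.zip l.tail).map Prod.fst = l.dropLast
  | [] => rfl
  | [_] => rfl
  | x :: y :: ys => by
    simp only [List.tail_cons, List.zip_cons_cons, List.map_cons]
    rw [show (y :: ys).zip ys = (y :: ys).zip (y :: ys).tail from rfl,
      map_fst_zip_tail (y :: ys)]
    simp

lemma map_snd_zip_tail (l : List V) : (l.zip l.tail).map Prod.snd = l.tail :=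
  List.map_snd_zip (by cases l <;> simp)

/-- degree equality is preserved by deleting a route. -/
theorem deleteRoute_degreeEquality
    (E : Finset (V × V)) (s t : V)
    (hA : Acyclic E) (hst : s ≠ t)
    (hs : UniqueSource E s) (ht : UniqueSink E t)
    (hDE : DegreeEquality E s t)
    (l : List V) (hl : IsRoute E s t l) :
    DegreeEquality (E \ (edgeList l).toFinset) s t := by
  obtain ⟨hc, hhead, hlast, hlen⟩ := hl
  intro v hvs hvt
  set T := (edgeList l).toFinset with hT
  have hnd : l.Nodup := nodup_of_chain' hA hc
  have hne : l ≠ [] := by rintro rfl; simp at hlen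
  have hndE : (edgeList l).Nodup := by
    have h1 : ((edgeList l).map Prod.fst).Nodup := by
      rw [edgeList, map_fst_zip_tail]
      exact hnd.sublist (List.dropLast_sublist l)
    exact h1.of_map
  have hTE : T ⊆ E := by
    intro e he
    rw [hT, List.mem_toFinset] at he
    obtain ⟨a, b⟩ := e
    exact chain'_mem_zip hc he
  -- counting route edges at v
  have hin : indeg T v = l.tail.count v := by
    have h1 : ((edgeList l).filter (fun e => decide (e.2 = v))).toFinset
        = T.filter (fun e => e.2 = v) := by
      ext e; simp [hT]
    rw [indeg, ← h1, List.toFinset_card_of_nodup (hndE.filter _),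
      ← List.countP_eq_length_filter, ← map_snd_zip_tail l, List.count, List.countP_map]
    rfl
  have hout : outdeg T v = l.dropLast.count v := by
    have h1 : ((edgeList l).filter (fun e => decide (e.1 = v))).toFinset
        = T.filter (fun e => e.1 = v) := by
      ext e; simp [hT]
    rw [outdeg, ← h1, List.toFinset_card_of_nodup (hndE.filter _),
      ← List.countP_eq_length_filter, ← map_fst_zip_tail l, List.count, List.countP_map]
    rfl
  have hcount : l.tail.count v = l.dropLast.count v := by
    have h1 : l.tail.count v = l.count v := by
      obtain ⟨x, xs, rfl⟩ : ∃ x xs, l = x :: xs := by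
        cases l with
        | nil => exact absurd rfl hne
        | cons x xs => exact ⟨x, xs, rfl⟩
      have hx : x = s := by simpa using hhead
      simp [List.count_cons, show ¬ x = v from fun h => hvs (h ▸ hx)]
    have h2 : l.dropLast.count v = l.count v := by
      have hlast' : l.getLast hne = t := by
        rw [List.getLast?_eq_getLast hne] at hlast
        exact Option.some.inj hlast
      conv_rhs => rw [← List.dropLast_append_getLast hne]
      rw [List.count_append, hlast']
      simp [List.count_singleton, show ¬ t = v from fun h => hvt h.symm]
    rw [h1, h2]
  -- subtraction
  have hfin : indeg (E \ T) v = indeg E v - indeg T v := by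
    rw [indeg, indeg, indeg]
    have h1 : (E \ T).filter (fun e => e.2 = v)
        = E.filter (fun e => e.2 = v) \ T.filter (fun e => e.2 = v) := by
      ext e; simp [Finset.mem_filter, Finset.mem_sdiff]; tauto
    rw [h1, Finset.card_sdiff_of_subset (Finset.filter_subset_filter _ hTE)]
  have hfout : outdeg (E \ T) v = outdeg E v - outdeg T v := by
    rw [outdeg, outdeg, outdeg]
    have h1 : (E \ T).filter (fun e => e.1 = v)
        = E.filter (fun e => e.1 = v) \ T.filter (fun e => e.1 = v) := by
      ext e; simp [Finset.mem_filter, Finset.mem_sdiff]; tauto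
    rw [h1, Finset.card_sdiff_of_subset (Finset.filter_subset_filter _ hTE)]
  rw [hfin, hfout, hDE v hvs hvt, hin, hout, hcount]
end

section
/- Every flow polytope of a finite DAG is a face of a Gorenstein flow polytope. Concretely: for any finite DAG G with unique source s and sink t, there is a DAG G' containing G (obtained by adding edges from s to inner vertices or from inner vertices to t) satisfying degree equality such that the flow polytope F_1(G) is the face of F_1(G') obtained by setting the flow on all added edges to zero. -/
open Finset

variable {V : Type*} [DecidableEq V] [Fintype V]

/-- In-degree in a multigraph whose edges are indexed by a finite type. -/
def mIndeg {ε : Type*} [Fintype ε] (tgt : ε → V) (v : V) [DecidablePred fun e => tgt e = v] : ℕ :=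
  (Finset.univ.filter fun e => tgt e = v).card

/-- Out-degree in a multigraph whose edges are indexed by a finite type. -/
def mOutdeg {ε : Type*} [Fintype ε] (src : ε → V) (v : V) [DecidablePred fun e => src e = v] : ℕ :=
  (Finset.univ.filter fun e => src e = v).card

/-- One-step reachability relation of a multigraph. -/
def Step {ε : Type*} (src tgt : ε → V) (u v : V) : Prop := ∃ e, src e = u ∧ tgt e = v

/-- Acyclicity of a multigraph. -/
def MAcyclic {ε : Type*} (src tgt : ε → V) : Prop :=
  ∀ v : V, ¬ Relation.TransGen (Step src tgt) v v

/-- The flow polytope of flows of strength one on a multigraph. -/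
def FlowPoly {ε : Type*} [Fintype ε] [DecidableEq ε] (src tgt : ε → V) (s t : V) :
    Set (ε → ℝ) :=
  {x | (∀ e, 0 ≤ x e) ∧
    (∀ v, v ≠ s → v ≠ t →
      ∑ e ∈ Finset.univ.filter fun e => tgt e = v, x e
        = ∑ e ∈ Finset.univ.filter fun e => src e = v, x e) ∧
    ∑ e ∈ Finset.univ.filter fun e => src e = s, x e = 1}

open Classical in
/-- every flow polytope is a face of a Gorenstein flow polytope.  One may add
finitely many new edges, each from `s` to an inner vertex or from an inner vertex to `t`,
obtaining a DAG `G'` satisfying degree equality (hence with Gorenstein flow polytope),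
such that `F₁(G)` is the face of `F₁(G')` cut out by setting all new flows to zero. -/
theorem flowPolytope_face_of_gorenstein
    {ε : Type*} [Fintype ε] [DecidableEq ε] (src tgt : ε → V) (s t : V)
    (hst : s ≠ t) (hA : MAcyclic src tgt)
    (hs : mIndeg tgt s = 0) (hs' : ∀ v, mIndeg tgt v = 0 → v = s)
    (ht : mOutdeg src t = 0) (ht' : ∀ v, mOutdeg src v = 0 → v = t) :
    ∃ (N : ℕ) (fsrc ftgt : Fin N → V),
      (∀ f : Fin N,
        (fsrc f = s ∧ ftgt f ≠ s ∧ ftgt f ≠ t) ∨ (ftgt f = t ∧ fsrc f ≠ s ∧ fsrc f ≠ t)) ∧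
      (∀ v, v ≠ s → v ≠ t →
        mIndeg (Sum.elim tgt ftgt : ε ⊕ Fin N → V) v
          = mOutdeg (Sum.elim src fsrc : ε ⊕ Fin N → V) v) ∧
      (∀ x : ε ⊕ Fin N → ℝ, (∀ f, x (Sum.inr f) = 0) →
        (x ∈ FlowPoly (Sum.elim src fsrc) (Sum.elim tgt ftgt) s t ↔
          (x ∘ Sum.inl) ∈ FlowPoly src tgt s t)) := by
  classical
  let A : V → ℕ := fun v => if v = s ∨ v = t then 0 else mOutdeg src v - mIndeg tgt v
  let B : V → ℕ := fun v => if v = s ∨ v = t then 0 else mIndeg tgt v - mOutdeg src v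
  let E' : Type _ := (Σ v : V, Fin (A v)) ⊕ (Σ v : V, Fin (B v))
  let S : E' → V := Sum.elim (fun _ => s) (fun p => p.1)
  let T : E' → V := Sum.elim (fun p => p.1) (fun _ => t)
  let eqv : E' ≃ Fin (Fintype.card E') := Fintype.equivFin E'
  have hcntT : ∀ v : V, v ≠ t →
      (∑ f : Fin (Fintype.card E'), if T (eqv.symm f) = v then (1:ℕ) else 0) = A v := by
    intro v hv
    rw [Equiv.sum_comp eqv.symm (fun x => if T x = v then (1:ℕ) else 0), Fintype.sum_sum_type]
    have h2 : ∑ p : (Σ w : V, Fin (B w)), (if T (Sum.inr p) = v then (1:ℕ) else 0) = 0 := by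
      simp [T, Ne.symm hv]
    rw [h2, add_zero, ← Finset.univ_sigma_univ, Finset.sum_sigma]
    simp [T, apply_ite Finset.card, Finset.sum_ite_eq']
    exact (show (∑ a : V, ∑ _i : Fin (A a), if a = v then (1:ℕ) else 0) = A v by simp)
  have hcntS : ∀ v : V, v ≠ s →
      (∑ f : Fin (Fintype.card E'), if S (eqv.symm f) = v then (1:ℕ) else 0) = B v := by
    intro v hv
    rw [Equiv.sum_comp eqv.symm (fun x => if S x = v then (1:ℕ) else 0), Fintype.sum_sum_type]
    have h1 : ∑ p : (Σ w : V, Fin (A w)), (if S (Sum.inl p) = v then (1:ℕ) else 0) = 0 := by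
      simp [S, Ne.symm hv]
    rw [h1, zero_add, ← Finset.univ_sigma_univ, Finset.sum_sigma]
    simp [S, apply_ite Finset.card, Finset.sum_ite_eq']
    exact (show (∑ a : V, ∑ _i : Fin (B a), if a = v then (1:ℕ) else 0) = B v by simp)
  refine ⟨Fintype.card E', S ∘ eqv.symm, T ∘ eqv.symm, ?_, ?_, ?_⟩
  · intro f
    simp only [Function.comp_apply]
    rcases h : eqv.symm f with ⟨w, i⟩ | ⟨w, i⟩
    · have hw : ¬ (w = s ∨ w = t) := fun hws => absurd i.isLt (by simp [A, hws])
      push_neg at hw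
      exact Or.inl ⟨rfl, hw.1, hw.2⟩
    · have hw : ¬ (w = s ∨ w = t) := fun hws => absurd i.isLt (by simp [B, hws])
      push_neg at hw
      exact Or.inr ⟨rfl, hw.1, hw.2⟩
  · intro v hv1 hv2
    have hin : mIndeg tgt v = ∑ e : ε, if tgt e = v then (1:ℕ) else 0 :=
      Finset.card_filter _ _
    have hout : mOutdeg src v = ∑ e : ε, if src e = v then (1:ℕ) else 0 :=
      Finset.card_filter _ _
    have hAv : A v = mOutdeg src v - mIndeg tgt v := by simp [A, hv1, hv2]
    have hBv : B v = mIndeg tgt v - mOutdeg src v := by simp [B, hv1, hv2]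
    have goal1 : mIndeg (Sum.elim tgt (T ∘ eqv.symm) : ε ⊕ Fin (Fintype.card E') → V) v
        = mIndeg tgt v + A v := by
      rw [show mIndeg (Sum.elim tgt (T ∘ eqv.symm) : ε ⊕ Fin (Fintype.card E') → V) v
          = ∑ e : ε ⊕ Fin (Fintype.card E'),
              if Sum.elim tgt (T ∘ eqv.symm) e = v then (1:ℕ) else 0 from
        Finset.card_filter _ _]
      rw [Fintype.sum_sum_type]
      simp only [Sum.elim_inl, Sum.elim_inr, Function.comp_apply]
      exact congrArg₂ (· + ·) hin.symm (hcntT v hv2)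
    have goal2 : mOutdeg (Sum.elim src (S ∘ eqv.symm) : ε ⊕ Fin (Fintype.card E') → V) v
        = mOutdeg src v + B v := by
      rw [show mOutdeg (Sum.elim src (S ∘ eqv.symm) : ε ⊕ Fin (Fintype.card E') → V) v
          = ∑ e : ε ⊕ Fin (Fintype.card E'),
              if Sum.elim src (S ∘ eqv.symm) e = v then (1:ℕ) else 0 from
        Finset.card_filter _ _]
      rw [Fintype.sum_sum_type]
      simp only [Sum.elim_inl, Sum.elim_inr, Function.comp_apply]
      exact congrArg₂ (· + ·) hout.symm (hcntS v hv1)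
    rw [goal1, goal2, hAv, hBv]
    omega
  · intro x hx0
    have hsum : ∀ (g : ε → V) (g' : Fin (Fintype.card E') → V) (v : V),
        ∑ y ∈ Finset.univ.filter (fun y => Sum.elim g g' y = v), x y
          = ∑ e ∈ Finset.univ.filter (fun e => g e = v), x (Sum.inl e) := by
      intro g g' v
      rw [Finset.sum_filter, Finset.sum_filter, Fintype.sum_sum_type]
      simp [hx0]
      rfl
    simp only [FlowPoly, Set.mem_setOf_eq, hsum, Function.comp_apply]
    constructor
    · rintro ⟨h1, h2, h3⟩
      exact ⟨fun e => h1 _, h2, h3⟩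
    · rintro ⟨h1, h2, h3⟩
      refine ⟨?_, h2, h3⟩
      rintro (e | f)
      · exact h1 e
      · simp [hx0 f]
end

section
/- Let G be a finite DAG satisfying degree equality and R a route decomposition of G, where a transversal of R is a set M = {e_R : R ∈ R} consisting of one edge chosen from each route of R. Then a collection S of routes all avoid some common transversal of R if and only if no route of R has its edge set contained in the union of the edge sets of the routes in S. -/
open Finset

variable {V : Type*} [DecidableEq V] [Fintype V]

/-- A transversal of a route decomposition: a set of edges containing exactly one edge
from each route. -/
def IsTransversal (R : Finset (List V)) (M : Finset (V × V)) : Prop :=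
  (∀ e ∈ M, ∃ l ∈ R, e ∈ edgeList l) ∧
  (∀ l ∈ R, ∃ e ∈ M, e ∈ edgeList l ∧ ∀ e' ∈ M, e' ∈ edgeList l → e' = e)

/-- A route avoids a transversal if it uses none of its edges. -/
def Avoids (M : Finset (V × V)) (l : List V) : Prop := ∀ e ∈ M, e ∉ edgeList l

/-- a collection `S` of routes all avoid a common transversal of the route
decomposition `R` if and only if no route of `R` has its edge set contained in the union
of the edge sets of the routes in `S`. -/
theorem avoid_transversal_iff_no_route_covered
    (E : Finset (V × V)) (s t : V)
    (hA : Acyclic E) (hst : s ≠ t)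
    (hs : UniqueSource E s) (ht : UniqueSink E t)
    (hDE : DegreeEquality E s t)
    (R : Finset (List V)) (hR : IsRouteDecomp E s t R)
    (S : Finset (List V)) (hS : ∀ l ∈ S, IsRoute E s t l) :
    (∃ M : Finset (V × V), IsTransversal R M ∧ ∀ l ∈ S, Avoids M l) ↔
      ∀ r ∈ R, ¬ (∀ e ∈ edgeList r, ∃ l ∈ S, e ∈ edgeList l) := by
  classical
  constructor
  · rintro ⟨M, ⟨hM1, hM2⟩, hAv⟩ r hr hcov
    obtain ⟨e, heM, her, -⟩ := hM2 r hr
    obtain ⟨l, hl, hel⟩ := hcov e her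
    exact hAv l hl e heM hel
  · intro h
    have key : ∀ r ∈ R, ∃ e, e ∈ edgeList r ∧ ∀ l ∈ S, e ∉ edgeList l := by
      intro r hr
      have hr' := h r hr
      push_neg at hr'
      obtain ⟨e, he, he2⟩ := hr'
      exact ⟨e, he, he2⟩
    choose f hf1 hf2 using key
    refine ⟨R.attach.image (fun r => f r.1 r.2), ⟨?_, ?_⟩, ?_⟩
    · intro e he
      simp only [Finset.mem_image, Finset.mem_attach, true_and, Subtype.exists] at he
      obtain ⟨m, hm, rfl⟩ := he
      exact ⟨m, hm, hf1 m hm⟩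
    · intro l hl
      refine ⟨f l hl, ?_, hf1 l hl, ?_⟩
      · exact Finset.mem_image_of_mem _ (Finset.mem_attach _ ⟨l, hl⟩)
      · intro e' he' hel
        simp only [Finset.mem_image, Finset.mem_attach, true_and, Subtype.exists] at he'
        obtain ⟨m, hm, rfl⟩ := he'
        by_cases hml : m = l
        · subst hml; rfl
        · exact absurd hel (hR.2.1 m hm l hl hml _ (hf1 m hm))
    · intro l hl e he
      simp only [Finset.mem_image, Finset.mem_attach, true_and, Subtype.exists] at he
      obtain ⟨m, hm, rfl⟩ := he
      exact hf2 m hm l hl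
end

section
/- Let G be a finite DAG satisfying degree equality with route decomposition R = {R_1, ..., R_k} linearly ordered, inducing the route decomposition framing. If G has an inner vertex v with indegree at least 3, then there exist three routes R_a, R_b, R_c ∈ R incident to v and a route S of G such that S conflicts (in the DKK sense for the route decomposition framing) with one of R_a, R_b, R_c. -/
open Finset

variable {V : Type*} [DecidableEq V] [Fintype V]

/-- The segment of a vertex list `l` from vertex `u` to vertex `w` (inclusive). -/
def seg (l : List V) (u w : V) : List V :=
  ((l.dropWhile fun x => decide (x ≠ u)).takeWhile fun x => decide (x ≠ w)) ++ [w]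

/-- `e` has a strictly smaller label than `f` in the route decomposition framing given by
the ordered route decomposition `ℛ`. -/
def LabelLt {k : ℕ} (ℛ : Fin k → List V) (e f : V × V) : Prop :=
  ∃ i j : Fin k, i < j ∧ e ∈ edgeList (ℛ i) ∧ f ∈ edgeList (ℛ j)

/-- The in-path of `P` at `v` precedes the in-path of `Q` at `v` in the route
decomposition framing: at the vertex `w` where the two in-paths diverge (they agree from
`w` to `v`), the incoming edge of `P` is smaller than that of `Q`. -/
def InLt {k : ℕ} (ℛ : Fin k → List V) (v : V) (P Q : List V) : Prop :=
  ∃ (w : V) (eP eQ : V × V), seg P w v = seg Q w v ∧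
    eP ∈ edgeList P ∧ eP.2 = w ∧ eQ ∈ edgeList Q ∧ eQ.2 = w ∧ LabelLt ℛ eP eQ

/-- The out-path of `P` at `v` precedes the out-path of `Q` at `v` in the route
decomposition framing. -/
def OutLt {k : ℕ} (ℛ : Fin k → List V) (v : V) (P Q : List V) : Prop :=
  ∃ (w : V) (eP eQ : V × V), seg P v w = seg Q v w ∧
    eP ∈ edgeList P ∧ eP.1 = w ∧ eQ ∈ edgeList Q ∧ eQ.1 = w ∧ LabelLt ℛ eP eQ

/-- Two routes conflict (in the DKK sense, for the route decomposition framing) if at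
some common inner vertex `v` we have `Pv ≺ Qv` on in-paths and `vQ ≺ vP` on out-paths. -/
def Conflict {k : ℕ} (ℛ : Fin k → List V) (s t : V) (P Q : List V) : Prop :=
  ∃ v : V, v ≠ s ∧ v ≠ t ∧ v ∈ P ∧ v ∈ Q ∧ InLt ℛ v P Q ∧ OutLt ℛ v Q P

section Helpers

set_option linter.unusedSectionVars false

lemma edgeList_cons₂ (a b : V) (l : List V) :
    edgeList (a :: b :: l) = (a, b) :: edgeList (b :: l) := rfl

lemma mem_edgeList_iff {e : V × V} {l : List V} :
    e ∈ edgeList l ↔ ∃ l₁ l₂, l = l₁ ++ e.1 :: e.2 :: l₂ := by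
  induction l with
  | nil =>
    simp only [edgeList, List.zip_nil_left, List.not_mem_nil, false_iff]
    rintro ⟨l₁, l₂, h⟩
    exact absurd h (by simp)
  | cons a l ih =>
    cases l with
    | nil =>
      simp only [edgeList, List.tail_cons, List.zip_nil_right, List.not_mem_nil, false_iff]
      rintro ⟨l₁, l₂, h⟩
      have := congrArg List.length h
      simp [List.length_append] at this
      omega
    | cons b m =>
      rw [edgeList_cons₂, List.mem_cons, ih]
      constructor
      · rintro (h | ⟨l₁, l₂, h⟩)
        · exact ⟨[], m, by subst h; rfl⟩
        · exact ⟨a :: l₁, l₂, by simp [h]⟩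
      · rintro ⟨l₁, l₂, h⟩
        cases l₁ with
        | nil =>
          left
          simp only [List.nil_append, List.cons.injEq] at h
          rw [h.1, h.2.1]
        | cons x l₁ =>
          right
          simp only [List.cons_append, List.cons.injEq] at h
          exact ⟨l₁, l₂, h.2⟩

lemma fst_mem_of_mem_edgeList {e : V × V} {l : List V} (h : e ∈ edgeList l) : e.1 ∈ l :=
  (List.of_mem_zip (by simpa [edgeList] using h)).1

lemma snd_mem_tail_of_mem_edgeList {e : V × V} {l : List V} (h : e ∈ edgeList l) :
    e.2 ∈ l.tail :=
  (List.of_mem_zip (by simpa [edgeList] using h)).2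

lemma snd_mem_of_mem_edgeList {e : V × V} {l : List V} (h : e ∈ edgeList l) : e.2 ∈ l :=
  l.tail_sublist.mem (snd_mem_tail_of_mem_edgeList h)

lemma seg_self (l : List V) (v : V) : seg l v v = [v] := by
  unfold seg
  suffices h :
      ((l.dropWhile fun x => decide (x ≠ v)).takeWhile fun x => decide (x ≠ v)) = [] by
    rw [h, List.nil_append]
  induction l with
  | nil => rfl
  | cons a l ih =>
    by_cases h : a = v
    · subst h
      rw [List.dropWhile_cons_of_neg (by simp), List.takeWhile_cons_of_neg (by simp)]
    · rwa [List.dropWhile_cons_of_pos (by simp [h])]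

lemma sublist_pair_decomp {x : V} : ∀ {l : List V}, List.Sublist [x, x] l →
    ∃ l₁ l₂ l₃, l = l₁ ++ x :: (l₂ ++ x :: l₃) := by
  intro l h
  induction l with
  | nil => simp at h
  | cons a l ih =>
    cases h with
    | cons _ h =>
      obtain ⟨l₁, l₂, l₃, rfl⟩ := ih h
      exact ⟨a :: l₁, l₂, l₃, rfl⟩
    | cons_cons _ h =>
      obtain ⟨l₂, l₃, rfl⟩ := List.append_of_mem (List.singleton_sublist.1 h)
      exact ⟨[], l₂, l₃, rfl⟩

lemma chain'_nodup {E : Finset (V × V)} (hA : Acyclic E) {l : List V}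
    (hc : l.Chain' fun a b => (a, b) ∈ E) : l.Nodup := by
  by_contra h
  obtain ⟨x, hx⟩ := List.exists_duplicate_iff_not_nodup.2 h
  obtain ⟨l₁, l₂, l₃, rfl⟩ := sublist_pair_decomp (List.duplicate_iff_sublist.1 hx)
  have h1 : List.Chain' (fun a b => (a, b) ∈ E) (x :: (l₂ ++ x :: l₃)) :=
    hc.suffix ⟨l₁, rfl⟩
  have h2 : List.Chain (fun a b => (a, b) ∈ E) x (l₂ ++ x :: l₃) := h1
  exact hA x l₂ (List.isChain_cons_split.1 h1).1

lemma edgeList_snd_inj : ∀ {l : List V}, l.Nodup →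
    ∀ {e f : V × V}, e ∈ edgeList l → f ∈ edgeList l → e.2 = f.2 → e = f := by
  intro l
  induction l with
  | nil => intro _ e f he _ _; simp [edgeList] at he
  | cons a l ih =>
    cases l with
    | nil => intro _ e f he _ _; simp [edgeList] at he
    | cons b m =>
      intro hnd e f he hf h2
      rw [edgeList_cons₂, List.mem_cons] at he hf
      have hnd' : (b :: m).Nodup := hnd.of_cons
      have hb : b ∉ m := (List.nodup_cons.1 hnd').1
      rcases he with rfl | he <;> rcases hf with rfl | hf
      · rfl
      · exact absurd (snd_mem_tail_of_mem_edgeList hf) (h2 ▸ hb)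
      · exact absurd (snd_mem_tail_of_mem_edgeList he) (by rw [h2]; exact hb)
      · exact ih hnd' he hf h2

lemma exists_out_edge {l : List V} {v t : V} (hv : v ∈ l) (hl : l.getLast? = some t)
    (hvt : v ≠ t) : ∃ w, (v, w) ∈ edgeList l := by
  obtain ⟨l₁, l₂, rfl⟩ := List.append_of_mem hv
  cases l₂ with
  | nil =>
    rw [List.getLast?_concat] at hl
    exact absurd (Option.some_injective _ hl) hvt
  | cons w l₂ =>
    exact ⟨w, mem_edgeList_iff.2 ⟨l₁, l₂, rfl⟩⟩

lemma key_conflict {k : ℕ} {E : Finset (V × V)} {s t : V} {ℛ : Fin k → List V}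
    (hroutes : ∀ i, IsRoute E s t (ℛ i))
    {v : V} (hvs : v ≠ s) (hvt : v ≠ t)
    {a b c : Fin k} (hab : a < b) (hbc : b < c)
    {ea eb ec : V × V}
    (hea : ea ∈ edgeList (ℛ a)) (hea2 : ea.2 = v)
    (heb : eb ∈ edgeList (ℛ b)) (heb2 : eb.2 = v)
    (hec : ec ∈ edgeList (ℛ c)) (hec2 : ec.2 = v) :
    ∃ S, IsRoute E s t S ∧ Conflict ℛ s t (ℛ b) S := by
  obtain ⟨hcA, hhA, hlA, _⟩ := hroutes a
  obtain ⟨hcB, hhB, hlB, _⟩ := hroutes b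
  obtain ⟨hcC, hhC, hlC, _⟩ := hroutes c
  have hvA : v ∈ ℛ a := hea2 ▸ snd_mem_of_mem_edgeList hea
  have hvB : v ∈ ℛ b := heb2 ▸ snd_mem_of_mem_edgeList heb
  obtain ⟨wa, hfa⟩ := exists_out_edge hvA hlA hvt
  obtain ⟨wb, hfb⟩ := exists_out_edge hvB hlB hvt
  obtain ⟨l₁, l₂, hC⟩ := mem_edgeList_iff.1 hec
  rw [hec2] at hC
  obtain ⟨m₁, m₂, hA'⟩ := mem_edgeList_iff.1 hfa
  have hC' := hcC
  rw [hC] at hC'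
  obtain ⟨hc1, hecv, -⟩ := List.isChain_append_cons_cons.1 hC'
  have hchainA : List.Chain' (fun p q => (p, q) ∈ E) (v :: wa :: m₂) :=
    hcA.suffix ⟨m₁, by rw [hA']⟩
  refine ⟨l₁ ++ ec.1 :: v :: wa :: m₂, ⟨?_, ?_, ?_, ?_⟩, v, hvs, hvt, hvB, by simp, ?_, ?_⟩
  · exact List.isChain_append_cons_cons.2 ⟨hc1, hecv, hchainA⟩
  · rw [← hhC, hC]
    cases l₁ <;> rfl
  · rw [← hlA, hA',
      List.getLast?_append_of_ne_nil _ (l₂ := ec.1 :: v :: wa :: m₂) (by simp),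
      List.getLast?_cons_cons,
      ← List.getLast?_append_of_ne_nil m₁ (l₂ := v :: wa :: m₂) (by simp)]
  · simp [List.length_append]
    omega
  · exact ⟨v, eb, ec, by rw [seg_self, seg_self], heb, heb2,
      mem_edgeList_iff.2 ⟨l₁, wa :: m₂, by rw [hec2]⟩, hec2, b, c, hbc, heb, hec⟩
  · exact ⟨v, (v, wa), (v, wb), by rw [seg_self, seg_self],
      mem_edgeList_iff.2 ⟨l₁ ++ [ec.1], m₂, by simp⟩, rfl, hfb, rfl, a, b, hab, hfa, hfb⟩

lemma key_full {k : ℕ} {E : Finset (V × V)} {s t : V} {ℛ : Fin k → List V}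
    (hroutes : ∀ i, IsRoute E s t (ℛ i))
    {v : V} (hvs : v ≠ s) (hvt : v ≠ t)
    {p q r : Fin k} (hpq : p < q) (hqr : q < r)
    {ep eq' er : V × V}
    (hep : ep ∈ edgeList (ℛ p)) (hep2 : ep.2 = v)
    (heq : eq' ∈ edgeList (ℛ q)) (heq2 : eq'.2 = v)
    (her : er ∈ edgeList (ℛ r)) (her2 : er.2 = v) :
    ∃ a b c : Fin k, a ≠ b ∧ a ≠ c ∧ b ≠ c ∧
      v ∈ ℛ a ∧ v ∈ ℛ b ∧ v ∈ ℛ c ∧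
      ∃ S : List V, IsRoute E s t S ∧
        ((Conflict ℛ s t S (ℛ a) ∨ Conflict ℛ s t (ℛ a) S) ∨
         (Conflict ℛ s t S (ℛ b) ∨ Conflict ℛ s t (ℛ b) S) ∨
         (Conflict ℛ s t S (ℛ c) ∨ Conflict ℛ s t (ℛ c) S)) := by
  obtain ⟨S, hS, hconf⟩ :=
    key_conflict hroutes hvs hvt hpq hqr hep hep2 heq heq2 her her2
  exact ⟨p, q, r, hpq.ne, (hpq.trans hqr).ne, hqr.ne,
    hep2 ▸ snd_mem_of_mem_edgeList hep, heq2 ▸ snd_mem_of_mem_edgeList heq,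
    her2 ▸ snd_mem_of_mem_edgeList her, S, hS, Or.inr (Or.inl (Or.inr hconf))⟩

end Helpers

/-- if some inner vertex has indegree at least 3, then there are three
routes of the decomposition through it and a route of `G` conflicting with one of them
(so the equatorial flow triangulation is not a DKK triangulation). -/
theorem indeg_three_gives_conflict
    (E : Finset (V × V)) (s t : V) (k : ℕ) (ℛ : Fin k → List V)
    (hA : Acyclic E) (hst : s ≠ t)
    (hs : UniqueSource E s) (ht : UniqueSink E t)
    (hDE : DegreeEquality E s t)
    (hroutes : ∀ i, IsRoute E s t (ℛ i))
    (hinj : Function.Injective ℛ)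
    (hdisj : ∀ i j : Fin k, i ≠ j → ∀ e ∈ edgeList (ℛ i), e ∉ edgeList (ℛ j))
    (hcover : ∀ e ∈ E, ∃ i, e ∈ edgeList (ℛ i))
    (v : V) (hvs : v ≠ s) (hvt : v ≠ t) (hdeg : 3 ≤ indeg E v) :
    ∃ a b c : Fin k, a ≠ b ∧ a ≠ c ∧ b ≠ c ∧
      v ∈ ℛ a ∧ v ∈ ℛ b ∧ v ∈ ℛ c ∧
      ∃ S : List V, IsRoute E s t S ∧
        ((Conflict ℛ s t S (ℛ a) ∨ Conflict ℛ s t (ℛ a) S) ∨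
         (Conflict ℛ s t S (ℛ b) ∨ Conflict ℛ s t (ℛ b) S) ∨
         (Conflict ℛ s t S (ℛ c) ∨ Conflict ℛ s t (ℛ c) S)) := by
  have h3 : 2 < (E.filter fun e => e.2 = v).card := hdeg
  obtain ⟨e₁, e₂, e₃, h1, h2, h3', h12, h13, h23⟩ := Finset.two_lt_card_iff.1 h3
  rw [Finset.mem_filter] at h1 h2 h3'
  obtain ⟨i₁, hi₁⟩ := hcover e₁ h1.1
  obtain ⟨i₂, hi₂⟩ := hcover e₂ h2.1
  obtain ⟨i₃, hi₃⟩ := hcover e₃ h3'.1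
  have hnd : ∀ i : Fin k, (ℛ i).Nodup := fun i => chain'_nodup hA (hroutes i).1
  have d12 : i₁ ≠ i₂ := by
    rintro rfl; exact h12 (edgeList_snd_inj (hnd i₁) hi₁ hi₂ (by rw [h1.2, h2.2]))
  have d13 : i₁ ≠ i₃ := by
    rintro rfl; exact h13 (edgeList_snd_inj (hnd i₁) hi₁ hi₃ (by rw [h1.2, h3'.2]))
  have d23 : i₂ ≠ i₃ := by
    rintro rfl; exact h23 (edgeList_snd_inj (hnd i₂) hi₂ hi₃ (by rw [h2.2, h3'.2]))
  rcases d12.lt_or_gt with o12 | o12 <;> rcases d13.lt_or_gt with o13 | o13 <;>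
    rcases d23.lt_or_gt with o23 | o23
  · exact key_full hroutes hvs hvt o12 o23 hi₁ h1.2 hi₂ h2.2 hi₃ h3'.2
  · exact key_full hroutes hvs hvt o13 o23 hi₁ h1.2 hi₃ h3'.2 hi₂ h2.2
  · exact absurd (o12.trans o23) o13.asymm
  · exact key_full hroutes hvs hvt o13 o12 hi₃ h3'.2 hi₁ h1.2 hi₂ h2.2
  · exact key_full hroutes hvs hvt o12 o13 hi₂ h2.2 hi₁ h1.2 hi₃ h3'.2
  · exact absurd (o23.trans o12) o13.asymm
  · exact key_full hroutes hvs hvt o23 o13 hi₂ h2.2 hi₃ h3'.2 hi₁ h1.2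
  · exact key_full hroutes hvs hvt o23 o12 hi₃ h3'.2 hi₂ h2.2 hi₁ h1.2
end
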